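/- arXiv:2311.15431 — 2 statements merged into one kernel-verified Lean document; each statement's English description precedes it below -/
import Mathlib

section
/- For any word u over a finite alphabet and any letter a, r(u, a) ≤ ρ(u). -/
/-! If `u ∼_{k+1} u·a`, then `a` occurs in `u`; write `u = x·a·y` with `a ∉ y`.
A subword `s` of `u` gives the subword `s·a` of `u·a`, hence (having length at most `k+1`)
of `u`, and as `a ∉ y` that embedding ends inside `x·a`, so `s ≼ x`. Thus `u ∼_k x·y` for
the strict subword `x·y`: `u` is not `k`-reduced, and `ρ(u) ≥ k+1`. -/

variable {A : Type*}

/-- Simon's congruence of order `k`: `u` and `v` have the same subwords of length ≤ k. -/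
def SimonCong (k : ℕ) (u v : List A) : Prop :=
  ∀ s : List A, s.length ≤ k → (s.Sublist u ↔ s.Sublist v)

/-- Subword distance `δ(u,v) = sup {k | u ∼ₖ v} ∈ ℕ∞`. -/
noncomputable def sdelta (u v : List A) : ℕ∞ :=
  sSup {d : ℕ∞ | ∃ k : ℕ, d = k ∧ SimonCong k u v}

/-- Right side distance `r(u,t) = δ(u, u·t)`. -/
noncomputable def rdist (u t : List A) : ℕ∞ := sdelta u (u ++ t)

/-- Left side distance `ℓ(t,u) = δ(t·u, u)`. -/
noncomputable def ldist (t u : List A) : ℕ∞ := sdelta (t ++ u) u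

/-- Piecewise complexity `h(u)`: least `n` such that any `v` with `u ∼ₙ v` equals `u`. -/
noncomputable def pcHeight (u : List A) : ℕ :=
  sInf {n : ℕ | ∀ v : List A, SimonCong n u v → v = u}

/-- `u` is `m`-reduced: no strict subword of `u` is `∼ₘ`-equivalent to `u`. -/
def Reduced (m : ℕ) (u : List A) : Prop :=
  ∀ u' : List A, u'.Sublist u → u' ≠ u → ¬ SimonCong m u u'

/-- Piecewise minimality index `ρ(u)`: least `m` such that `u` is `m`-reduced. -/
noncomputable def pcRho (u : List A) : ℕ := sInf {m : ℕ | Reduced m u}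

/-- An `A`-arch: contains every letter of `A` but no strict prefix does. -/
def IsArch (A : Type*) [Fintype A] (s : List A) : Prop :=
  (∀ a : A, a ∈ s) ∧ ∀ t : List A, t <+: s → t ≠ s → ∃ a : A, a ∉ t

/-- The infinite periodic word `u^ω`. -/
def omegaWord (u : List A) (hu : u ≠ []) (i : ℕ) : A :=
  u.get ⟨i % u.length, Nat.mod_lt i (List.length_pos_iff.mpr hu)⟩

/-- The arch-jumping function `α` on `u^ω`: `α(i)` is the least `j > i` such that
every letter of `A` occurs among positions `i, …, j-1` of `u^ω`. -/
noncomputable def archJump (u : List A) (hu : u ≠ []) (i : ℕ) : ℕ :=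
  sInf {j : ℕ | i < j ∧ ∀ a : A, ∃ m : ℕ, i ≤ m ∧ m < j ∧ omegaWord u hu m = a}

/-- `p` is an arch-period of `u` starting at `i`. -/
def IsArchPeriodAt (u : List A) (hu : u ≠ []) (i p : ℕ) : Prop :=
  0 < p ∧ ∃ k : ℕ, (archJump u hu)^[k + p] i ≡ (archJump u hu)^[k] i [MOD u.length]

/-- The arch-period of `u`: the least arch-period starting at 0. -/
noncomputable def archPeriod (u : List A) (hu : u ≠ []) : ℕ :=
  sInf {p : ℕ | IsArchPeriodAt u hu 0 p}

/-- `K_u`: the least `k` with `α^{k+p}(0) ≡ α^k(0) (mod L)`. -/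
noncomputable def archTransientIndex (u : List A) (hu : u ≠ []) : ℕ :=
  sInf {k : ℕ |
    (archJump u hu)^[k + archPeriod u hu] 0 ≡ (archJump u hu)^[k] 0 [MOD u.length]}

/-- The transient `T_u = α^{K_u}(0)`. -/
noncomputable def archTransient (u : List A) (hu : u ≠ []) : ℕ :=
  (archJump u hu)^[archTransientIndex u hu] 0

/-- The span `Δ_u = α^{K_u+p_u}(0) − α^{K_u}(0)`. -/
noncomputable def archSpan (u : List A) (hu : u ≠ []) : ℕ :=
  (archJump u hu)^[archTransientIndex u hu + archPeriod u hu] 0 - archTransient u hu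

/-- `u^n`: the `n`-fold concatenation of `u`. -/
def listPow (u : List A) (n : ℕ) : List A := (List.replicate n u).flatten

namespace List

variable {α : Type*}

theorem eq_append_cons_of_mem_notMem_right {a : α} {l : List α} (h : a ∈ l) :
    ∃ x y, l = x ++ a :: y ∧ a ∉ y := by
  obtain ⟨y', x', hl, hy'⟩ := eq_append_cons_of_mem (mem_reverse.mpr h)
  refine ⟨x'.reverse, y'.reverse, ?_, by simpa using hy'⟩
  rw [← reverse_reverse l, hl]
  simp

theorem sublist_of_append_singleton_sublist_append_cons {a : α} {s x y : List α} (hy : a ∉ y)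
    (h : s ++ [a] <+ x ++ a :: y) : s <+ x := by
  replace h : s ++ [a] <+ (x ++ [a]) ++ y := by simpa using h
  obtain ⟨s₁, s₂, hs, h₁, h₂⟩ := sublist_append_iff.mp h
  rcases eq_nil_or_concat s₂ with rfl | ⟨s₂, b, rfl⟩
  · rw [append_nil] at hs
    exact (append_sublist_append_right _).mp (hs ▸ h₁)
  · obtain ⟨-, rfl⟩ : s = s₁ ++ s₂ ∧ a = b := by simpa [← append_assoc] using hs
    exact absurd (h₂.subset (by simp)) hy

end List

open List

theorem SimonCong.mono {k k' : ℕ} {u v : List A} (h : k' ≤ k) (hc : SimonCong k u v) :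
    SimonCong k' u v := fun s hs => hc s (hs.trans h)

theorem Reduced.mono {m m' : ℕ} {u : List A} (h : m ≤ m') (hr : Reduced m u) :
    Reduced m' u := fun u' hsub hne hc => hr u' hsub hne (hc.mono h)

theorem reduced_length (u : List A) : Reduced u.length u :=
  fun _ hsub hne hc => hne (hsub.antisymm ((hc u le_rfl).mp (Sublist.refl u)))

theorem SimonCong.erase_last_of_append_singleton {k : ℕ} {a : A} {x y : List A} (hy : a ∉ y)
    (hc : SimonCong (k + 1) (x ++ a :: y) (x ++ a :: y ++ [a])) :
    SimonCong k (x ++ a :: y) (x ++ y) := by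
  intro s hs
  have hsub : x ++ y <+ x ++ a :: y := (sublist_cons_self a y).append_left x
  refine ⟨fun hsu => ?_, fun hsu => hsu.trans hsub⟩
  have hsa : s ++ [a] <+ x ++ a :: y :=
    (hc (s ++ [a]) (by simpa using hs)).mpr (hsu.append_right [a])
  exact (sublist_of_append_singleton_sublist_append_cons hy hsa).trans (sublist_append_left x y)

theorem not_reduced_of_simonCong_append_singleton {k : ℕ} {a : A} {u : List A}
    (hc : SimonCong (k + 1) u (u ++ [a])) : ¬ Reduced k u := by
  have ha : a ∈ u := by simpa using (hc [a] (by simp)).mpr (by simp)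
  obtain ⟨x, y, rfl, hy⟩ := eq_append_cons_of_mem_notMem_right ha
  exact fun hred => hred (x ++ y) ((sublist_cons_self a y).append_left x) (by simp)
    (hc.erase_last_of_append_singleton hy)

theorem le_pcRho_of_simonCong_append_singleton {k : ℕ} {a : A} {u : List A}
    (hc : SimonCong k u (u ++ [a])) : k ≤ pcRho u := by
  obtain _ | k := k
  · exact Nat.zero_le _
  by_contra! hlt
  have hred : Reduced (pcRho u) u :=
    Nat.sInf_mem (s := {m | Reduced m u}) ⟨_, reduced_length u⟩
  exact not_reduced_of_simonCong_append_singleton hc (hred.mono (Nat.lt_succ_iff.mp hlt))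

theorem stmt12_general {A : Type*} (u : List A) (a : A) :
    rdist u [a] ≤ (pcRho u : ℕ∞) :=
  sSup_le fun _ ⟨_, hd, hc⟩ => hd ▸ by exact_mod_cast le_pcRho_of_simonCong_append_singleton hc

/-- `r(u, a) ≤ ρ(u)`. -/
theorem stmt12 {A : Type*} [Fintype A] (u : List A) (a : A) :
    rdist u [a] ≤ (pcRho u : ℕ∞) :=
  stmt12_general u a
end

section
/- For all words u, v, t over a finite alphabet, r(u·v, t) ≤ ρ(u) + r(v, t) and ℓ(t, u·v) ≤ ρ(v) + ℓ(t, u). -/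
variable {A : Type*}

/-! If `u` is `m`-reduced then for every letter `a` there is a subword `x` of `u` with `|x| ≤ m`
such that `x·a` is not a subword of `u`: otherwise deleting the last `a` of `u` would not change
its subwords of length `≤ m`. Now if `u·v ∼ₖ u·w`, every subword `s` of `v` with
`|s| ≤ k - ρ(u)` starting with a letter `a` gives the subword `x·s` of `u·v`, hence of `u·w`,
and since `x·a` does not embed in `u`, the occurrence of `s` lies in `w`. So `v ∼_{k-ρ(u)} w`,
which is the first inequality; the second is its mirror image under reversal of words. -/

namespace List

theorem eq_append_cons_notMem_of_mem {a : A} {l : List A} (h : a ∈ l) :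
    ∃ s t, l = s ++ a :: t ∧ a ∉ t := by
  obtain ⟨t, s, hl, ht⟩ := eq_append_cons_of_mem (mem_reverse.mpr h)
  exact ⟨s.reverse, t.reverse, by simpa using congrArg reverse hl, by simpa using ht⟩

theorem cons_sublist_of_cons_sublist_append_of_notMem {a : A} {y e v : List A} (ha : a ∉ e)
    (h : a :: y <+ e ++ v) : a :: y <+ v := by
  induction e with
  | nil => exact h
  | cons b e ih =>
    rw [mem_cons, not_or] at ha
    exact ih ha.2 (h.of_cons_of_ne ha.1)

theorem sublist_of_concat_sublist_append_cons_of_notMem {a : A} {l w z : List A} (ha : a ∉ z)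
    (h : l ++ [a] <+ w ++ a :: z) : l <+ w := by
  rw [← reverse_sublist] at h ⊢
  simp only [reverse_append, reverse_cons, reverse_nil, nil_append,
    singleton_append, append_assoc] at h
  exact cons_sublist_cons.mp
    (cons_sublist_of_cons_sublist_append_of_notMem (by simpa using ha) h)

theorem cons_sublist_of_append_cons_sublist_append {a : A} {x y u v : List A}
    (h : x ++ a :: y <+ u ++ v) (hx : ¬ x ++ [a] <+ u) : a :: y <+ v := by
  obtain ⟨p, q, hpq, hp, hq⟩ := sublist_append_iff.mp h
  rcases append_eq_append_iff.mp hpq with ⟨e, rfl, he⟩ | ⟨e, rfl, rfl⟩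
  · rcases cons_eq_append_iff.mp he with ⟨rfl, rfl⟩ | ⟨e', rfl, -⟩
    · exact hq
    · exact absurd ((append_sublist_append_left x).mpr (by simp) |>.trans hp) hx
  · exact (sublist_append_right e _).trans hq

end List

open scoped List

theorem SimonCong.reverse {k : ℕ} {u v : List A} (h : SimonCong k u v) :
    SimonCong k u.reverse v.reverse := by
  intro s hs
  rw [List.sublist_reverse_iff, List.sublist_reverse_iff]
  exact h s.reverse (by simpa using hs)

theorem simonCong_reverse_iff {k : ℕ} {u v : List A} :
    SimonCong k u.reverse v.reverse ↔ SimonCong k u v :=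
  ⟨fun h => by simpa using h.reverse, SimonCong.reverse⟩

theorem sdelta_reverse (u v : List A) : sdelta u.reverse v.reverse = sdelta u v := by
  simp only [sdelta, simonCong_reverse_iff]

theorem le_sdelta {k : ℕ} {u v : List A} (h : SimonCong k u v) : (k : ℕ∞) ≤ sdelta u v :=
  le_sSup ⟨k, rfl, h⟩

theorem Reduced.reverse {m : ℕ} {u : List A} (h : Reduced m u) : Reduced m u.reverse := by
  intro u' hsub hne hc
  refine h u'.reverse (List.sublist_reverse_iff.mp hsub) ?_ (by simpa using hc.reverse)
  rintro rfl
  simp at hne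

theorem reduced_pcRho (u : List A) : Reduced (pcRho u) u :=
  Nat.sInf_mem (s := {m | Reduced m u}) ⟨u.length, fun _ hsub hne hc =>
    hne (hsub.eq_of_length_le ((hc u le_rfl).mp (List.Sublist.refl u)).length_le)⟩

theorem Reduced.exists_short_sublist_not_concat {m : ℕ} {u : List A} (h : Reduced m u) (a : A) :
    ∃ x, x <+ u ∧ x.length ≤ m ∧ ¬ x ++ [a] <+ u := by
  by_contra! hext
  have ha : a ∈ u := List.singleton_sublist.mp (hext [] (List.nil_sublist u) (Nat.zero_le m))
  obtain ⟨w, z, rfl, hz⟩ := List.eq_append_cons_notMem_of_mem ha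
  refine h (w ++ z) ((List.sublist_cons_self a z).append_left w) (by simp) fun s hs => ?_
  refine ⟨fun hsu => ?_, fun hsu => hsu.trans ((List.sublist_cons_self a z).append_left w)⟩
  obtain ⟨p, q, rfl, hp, hq⟩ := List.sublist_append_iff.mp hsu
  rcases List.sublist_cons_iff.mp hq with hq | ⟨y, rfl, hy⟩
  · exact hp.append hq
  · simp only [List.length_append, List.length_cons] at hs
    have hpa := hext p (hp.trans (List.sublist_append_left w _)) (by omega)
    have hpaa := hext (p ++ [a]) hpa (by rw [List.length_append, List.length_singleton]; omega)
    simpa using (List.sublist_of_concat_sublist_append_cons_of_notMem hz hpaa).append hy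

theorem SimonCong.of_append_left {k m : ℕ} {u v w : List A} (h : SimonCong k (u ++ v) (u ++ w))
    (hu : Reduced m u) : SimonCong (k - m) v w := by
  have transfer : ∀ {v w : List A}, SimonCong k (u ++ v) (u ++ w) →
      ∀ s : List A, s.length ≤ k - m → s <+ v → s <+ w := by
    intro v w h s hs hsv
    cases s with
    | nil => exact List.nil_sublist w
    | cons a s =>
      obtain ⟨x, hxu, hxm, hxa⟩ := hu.exists_short_sublist_not_concat a
      have hlen : (x ++ a :: s).length ≤ k := by
        simp only [List.length_append, List.length_cons] at hs ⊢
        omega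
      exact List.cons_sublist_of_append_cons_sublist_append ((h _ hlen).mp (hxu.append hsv)) hxa
  exact fun s hs => ⟨transfer h s hs, transfer (fun s hs => (h s hs).symm) s hs⟩

theorem sdelta_append_left_le {m : ℕ} {u : List A} (hu : Reduced m u) (v w : List A) :
    sdelta (u ++ v) (u ++ w) ≤ m + sdelta v w := by
  refine sSup_le ?_
  rintro _ ⟨k, rfl, hk⟩
  calc (k : ℕ∞) ≤ ((m + (k - m) : ℕ) : ℕ∞) := Nat.cast_le.mpr le_add_tsub
    _ = m + ((k - m : ℕ) : ℕ∞) := Nat.cast_add _ _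
    _ ≤ m + sdelta v w := by gcongr; exact le_sdelta (hk.of_append_left hu)

theorem sdelta_append_right_le {m : ℕ} {u : List A} (hu : Reduced m u) (v w : List A) :
    sdelta (v ++ u) (w ++ u) ≤ m + sdelta v w := by
  rw [← sdelta_reverse, ← sdelta_reverse v]
  simpa using sdelta_append_left_le hu.reverse v.reverse w.reverse

theorem stmt13_general {A : Type*} (u v t : List A) :
    rdist (u ++ v) t ≤ (pcRho u : ℕ∞) + rdist v t ∧
    ldist t (u ++ v) ≤ (pcRho v : ℕ∞) + ldist t u := by
  constructor
  · simpa only [rdist, List.append_assoc] using sdelta_append_left_le (reduced_pcRho u) v (v ++ t)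
  · simpa only [ldist, List.append_assoc] using sdelta_append_right_le (reduced_pcRho v) (t ++ u) u

/-- `r(u·v, t) ≤ ρ(u) + r(v, t)` and `ℓ(t, u·v) ≤ ρ(v) + ℓ(t, u)`. -/
theorem stmt13 {A : Type*} [Fintype A] (u v t : List A) :
    rdist (u ++ v) t ≤ (pcRho u : ℕ∞) + rdist v t ∧
    ldist t (u ++ v) ≤ (pcRho v : ℕ∞) + ldist t u :=
  stmt13_general u v t
end
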